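/- arXiv:1810.10940 — 4 statements merged into one kernel-verified Lean document; each statement's English description precedes it below -/
import Mathlib

section
/- Let G be a subcubic graph (every vertex has degree at most 3) containing an induced subgraph H isomorphic to the 'house' (the complement of the path P5 on 5 vertices). Let T be the set of three vertices of H forming a triangle. Then α(G - T) = α(G) - 1. -/
/-!
Let `T` be the triangle of the house. An independent set meets the clique `T` at most once, so
`α(G) ≤ α(G - T) + 1`. Conversely, take a maximum independent set `S` of `G - T`. The two
vertices of the house opposite the triangle are adjacent, so one of them is missing from `S`; the
triangle vertex adjacent to it has degree at most `3`, so its neighbours are exactly its three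
house neighbours, and none of them lies in `S`. Adding it to `S` gives `α(G) ≥ α(G - T) + 1`.
-/

/-- A set of vertices is independent if no two of its members are adjacent. -/
def IsIndepSet {V : Type*} (G : SimpleGraph V) (s : Set V) : Prop :=
  s.Pairwise fun a b => ¬ G.Adj a b

/-- The independence number: the largest cardinality of an independent set. -/
noncomputable def indepNum {V : Type*} (G : SimpleGraph V) : ℕ :=
  sSup {n | ∃ s : Finset V, IsIndepSet G ↑s ∧ s.card = n}
/-- Adjacency of the house graph (complement of `P₅`): a 4-cycle `0,1,2,3`
plus vertex `4` adjacent to the adjacent pair `0,1`; its unique triangle is `{0,1,4}`. -/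
def houseAdj (i j : Fin 5) : Prop :=
  (i = 0 ∧ j = 1) ∨ (i = 1 ∧ j = 0) ∨
  (i = 1 ∧ j = 2) ∨ (i = 2 ∧ j = 1) ∨
  (i = 2 ∧ j = 3) ∨ (i = 3 ∧ j = 2) ∨
  (i = 3 ∧ j = 0) ∨ (i = 0 ∧ j = 3) ∨
  (i = 0 ∧ j = 4) ∨ (i = 4 ∧ j = 0) ∨
  (i = 1 ∧ j = 4) ∨ (i = 4 ∧ j = 1)

open Finset

theorem indepNum_eq_simpleGraph_indepNum {V : Type*} (G : SimpleGraph V) :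
    indepNum G = G.indepNum := by
  simp only [indepNum, SimpleGraph.indepNum, SimpleGraph.isNIndepSet_iff]
  rfl

namespace SimpleGraph

variable {V : Type*} {G : SimpleGraph V}

theorem IsIndepSet.card_le_indepNum_induce [Finite V] {P : Set V} {s : Finset V}
    (hs : G.IsIndepSet s) (hsP : ↑s ⊆ P) : #s ≤ (G.induce P).indepNum := by
  classical
  calc #s = #(s.subtype (· ∈ P)) := by
        rw [card_subtype, filter_true_of_mem fun v hv => hsP hv]
    _ ≤ (G.induce P).indepNum := by
      refine IsIndepSet.card_le_indepNum fun a ha b hb hab => ?_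
      rw [mem_coe, mem_subtype] at ha hb
      exact hs ha hb (Subtype.coe_ne_coe.2 hab)

theorem exists_isIndepSet_subset_card_eq_indepNum_induce (P : Set V) :
    ∃ s : Finset V, ↑s ⊆ P ∧ G.IsIndepSet s ∧ #s = (G.induce P).indepNum := by
  obtain ⟨s, hs, hcard⟩ := (G.induce P).exists_isNIndepSet_indepNum
  refine ⟨s.map (Function.Embedding.subtype _), ?_, ?_, by rw [card_map, hcard]⟩
  · simp
  · rw [coe_map]
    rintro _ ⟨a, ha, rfl⟩ _ ⟨b, hb, rfl⟩ hab
    exact hs ha hb (ne_of_apply_ne _ hab)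

theorem IsIndepSet.subsingleton_inter {s T : Set V} (hs : G.IsIndepSet s)
    (hT : G.IsClique T) : (s ∩ T).Subsingleton :=
  fun _ ha _ hb => by_contra fun hab => hs ha.1 hb.1 hab (hT ha.2 hb.2 hab)

theorem indepNum_le_indepNum_induce_compl_add_one [Finite V] {T : Set V}
    (hT : G.IsClique T) : G.indepNum ≤ (G.induce Tᶜ).indepNum + 1 := by
  classical
  obtain ⟨s, ⟨hs, hcard⟩⟩ := G.exists_isNIndepSet_indepNum
  have hout : #{v ∈ s | v ∉ T} ≤ (G.induce Tᶜ).indepNum :=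
    IsIndepSet.card_le_indepNum_induce (hs.mono (coe_subset.2 (filter_subset _ s)))
      fun _ hv => (mem_filter.1 hv).2
  have hin : #{v ∈ s | v ∈ T} ≤ 1 :=
    card_le_one.2 fun _ ha _ hb =>
      hs.subsingleton_inter hT (mem_filter.1 ha) (mem_filter.1 hb)
  have := card_filter_add_card_filter_not (s := s) (· ∈ T)
  omega

theorem indepNum_induce_add_one_le [Finite V] {P : Set V}
    (h : ∀ s : Finset V, ↑s ⊆ P → G.IsIndepSet s → ∃ u ∉ P, ∀ v ∈ s, ¬ G.Adj u v) :
    (G.induce P).indepNum + 1 ≤ G.indepNum := by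
  classical
  obtain ⟨s, hsP, hs, hcard⟩ := G.exists_isIndepSet_subset_card_eq_indepNum_induce P
  obtain ⟨u, huP, hu⟩ := h s hsP hs
  have hus : u ∉ s := fun hu' => huP (hsP hu')
  rw [← hcard, ← card_insert_of_notMem hus]
  refine IsIndepSet.card_le_indepNum ?_
  rw [coe_insert]
  exact hs.insert fun v hv _ => ⟨hu v hv, fun hvu => hu v hv hvu.symm⟩

theorem neighborSet_subset_of_degree_le [Fintype V] [DecidableRel G.Adj] {v : V}
    {t : Finset V} (hdeg : G.degree v ≤ #t) (ht : ∀ w ∈ t, G.Adj v w) :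
    G.neighborSet v ⊆ t := by
  rw [← coe_neighborFinset,
    ← eq_of_subset_of_card_le (fun w hw => (G.mem_neighborFinset v w).2 (ht w hw)) hdeg]

theorem isClique_house_triangle {f : Fin 5 → V}
    (hind : ∀ i j, G.Adj (f i) (f j) ↔ houseAdj i j) :
    G.IsClique {f 0, f 1, f 4} := by
  simp [isClique_insert, hind, houseAdj]

variable [Fintype V] [DecidableRel G.Adj] {f : Fin 5 → V}

theorem neighborSet_subset_of_houseAdj (hdeg : ∀ v, G.degree v ≤ 3) (hf : Function.Injective f)
    (hind : ∀ i j, G.Adj (f i) (f j) ↔ houseAdj i j) {i a b c : Fin 5}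
    (ha : houseAdj i a) (hb : houseAdj i b) (hc : houseAdj i c) (hab : a ≠ b) (hac : a ≠ c)
    (hbc : b ≠ c) : G.neighborSet (f i) ⊆ {f a, f b, f c} := by
  have := neighborSet_subset_of_degree_le (v := f i)
    (t := ({a, b, c} : Finset (Fin 5)).map ⟨f, hf⟩)
    (by rw [card_map, card_eq_three.2 ⟨a, b, c, hab, hac, hbc, rfl⟩]; exact hdeg _)
    fun w hw => by
      obtain ⟨j, hj, rfl⟩ := mem_map.1 hw
      simp only [mem_insert, mem_singleton] at hj
      rcases hj with rfl | rfl | rfl <;> exact (hind _ _).2 ‹_›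
  simpa [Set.image_insert_eq] using this

theorem exists_house_triangle_vertex_forall_not_adj (hdeg : ∀ v, G.degree v ≤ 3)
    (hf : Function.Injective f) (hind : ∀ i j, G.Adj (f i) (f j) ↔ houseAdj i j)
    (s : Finset V) (hsT : ↑s ⊆ ({f 0, f 1, f 4} : Set V)ᶜ) (hs : G.IsIndepSet s) :
    ∃ u ∉ ({f 0, f 1, f 4} : Set V)ᶜ, ∀ v ∈ s, ¬ G.Adj u v := by
  have hN0 : G.neighborSet (f 0) ⊆ {f 1, f 3, f 4} :=
    neighborSet_subset_of_houseAdj hdeg hf hind (by simp [houseAdj]) (by simp [houseAdj])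
      (by simp [houseAdj]) (by decide) (by decide) (by decide)
  have hN1 : G.neighborSet (f 1) ⊆ {f 0, f 2, f 4} :=
    neighborSet_subset_of_houseAdj hdeg hf hind (by simp [houseAdj]) (by simp [houseAdj])
      (by simp [houseAdj]) (by decide) (by decide) (by decide)
  by_cases h2 : f 2 ∈ s
  · have h3 : f 3 ∉ s := fun h3 =>
      hs h2 h3 (hf.ne (by decide)) ((hind 2 3).2 (by simp [houseAdj]))
    refine ⟨f 0, by simp, fun v hv hadj => ?_⟩
    rcases hN0 hadj with rfl | rfl | rfl
    · exact hsT hv (by simp)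
    · exact h3 hv
    · exact hsT hv (by simp)
  · refine ⟨f 1, by simp, fun v hv hadj => ?_⟩
    rcases hN1 hadj with rfl | rfl | rfl
    · exact hsT hv (by simp)
    · exact h2 hv
    · exact hsT hv (by simp)

end SimpleGraph

/-- House reduction: deleting the triangle of an induced house in a subcubic graph
decreases the independence number by exactly 1. -/
theorem house_reduction {V : Type*} [Fintype V] (G : SimpleGraph V) [DecidableRel G.Adj]
    (hdeg : ∀ v, G.degree v ≤ 3)
    (f : Fin 5 → V) (hf : Function.Injective f)
    (hind : ∀ i j, G.Adj (f i) (f j) ↔ houseAdj i j) :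
    indepNum (G.induce {v | v ≠ f 0 ∧ v ≠ f 1 ∧ v ≠ f 4}) = indepNum G - 1 := by
  have hT : {v | v ≠ f 0 ∧ v ≠ f 1 ∧ v ≠ f 4} = ({f 0, f 1, f 4} : Set V)ᶜ := by
    ext; simp
  have hle := G.indepNum_le_indepNum_induce_compl_add_one (G.isClique_house_triangle hind)
  have hge := G.indepNum_induce_add_one_le
    (G.exists_house_triangle_vertex_forall_not_adj hdeg hf hind)
  rw [hT, indepNum_eq_simpleGraph_indepNum, indepNum_eq_simpleGraph_indepNum]
  omega
end

section
/- Let G = (V,E) be a subcubic graph and K ⊆ V a set of 5 vertices such that G[K] is isomorphic to K_{2,3} (complete bipartite graph with parts of size 2 and 3). Let G' be the graph obtained from G by deleting K and adding a new vertex z adjacent to every vertex in N(K) \ K. Then α(G') = α(G) - 2. -/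
lemma indep_bddAbove {V : Type*} [Fintype V] (G : SimpleGraph V) :
    BddAbove {n | ∃ s : Finset V, IsIndepSet G ↑s ∧ s.card = n} := by
  refine ⟨Fintype.card V, ?_⟩
  rintro n ⟨s, -, rfl⟩
  simpa using s.card_le_univ

lemma card_le_indepNum {V : Type*} [Fintype V] (G : SimpleGraph V) {s : Finset V}
    (h : IsIndepSet G ↑s) : s.card ≤ indepNum G :=
  le_csSup (indep_bddAbove G) ⟨s, h, rfl⟩

lemma exists_indepNum {V : Type*} [Fintype V] (G : SimpleGraph V) :
    ∃ s : Finset V, IsIndepSet G ↑s ∧ s.card = indepNum G := by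
  have hne : {n | ∃ s : Finset V, IsIndepSet G ↑s ∧ s.card = n}.Nonempty :=
    ⟨0, ∅, by simp [IsIndepSet], by simp⟩
  exact Nat.sSup_mem hne (indep_bddAbove G)


section Basic
variable {V : Type*} [Fintype V] [DecidableEq V]
    (G : SimpleGraph V) [DecidableRel G.Adj]
    (f : Fin 2 ⊕ Fin 3 → V)

lemma aux_hxy (hind : ∀ i j, G.Adj (f i) (f j) ↔
      ((∃ a b, i = Sum.inl a ∧ j = Sum.inr b) ∨ (∃ a b, i = Sum.inr a ∧ j = Sum.inl b)))
    (a : Fin 2) (b : Fin 3) : G.Adj (f (Sum.inl a)) (f (Sum.inr b)) :=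
  (hind _ _).2 (Or.inl ⟨a, b, rfl, rfl⟩)

lemma aux_hxx (hind : ∀ i j, G.Adj (f i) (f j) ↔
      ((∃ a b, i = Sum.inl a ∧ j = Sum.inr b) ∨ (∃ a b, i = Sum.inr a ∧ j = Sum.inl b)))
    (a b : Fin 2) : ¬ G.Adj (f (Sum.inl a)) (f (Sum.inl b)) := by
  intro h
  rcases (hind _ _).1 h with ⟨_, _, _, h2, _⟩ | ⟨_, _, h1, _⟩ <;> simp_all

lemma aux_hyy (hind : ∀ i j, G.Adj (f i) (f j) ↔
      ((∃ a b, i = Sum.inl a ∧ j = Sum.inr b) ∨ (∃ a b, i = Sum.inr a ∧ j = Sum.inl b)))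
    (a b : Fin 3) : ¬ G.Adj (f (Sum.inr a)) (f (Sum.inr b)) := by
  intro h
  rcases (hind _ _).1 h with ⟨_, _, h1, _⟩ | ⟨_, _, _, h2, _⟩ <;> simp_all

lemma aux_hxout (hdeg : ∀ v, G.degree v ≤ 3) (hf : Function.Injective f)
    (hind : ∀ i j, G.Adj (f i) (f j) ↔
      ((∃ a b, i = Sum.inl a ∧ j = Sum.inr b) ∨ (∃ a b, i = Sum.inr a ∧ j = Sum.inl b)))
    (a : Fin 2) (v : V) (hv : v ∉ Set.range f) : ¬ G.Adj (f (Sum.inl a)) v := by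
  intro hadj
  have hsub : {v, f (Sum.inr 0), f (Sum.inr 1), f (Sum.inr 2)} ⊆
      G.neighborFinset (f (Sum.inl a)) := by
    intro w hw
    simp only [Finset.mem_insert, Finset.mem_singleton] at hw
    rw [SimpleGraph.mem_neighborFinset]
    rcases hw with rfl | rfl | rfl | rfl
    · exact hadj
    all_goals exact aux_hxy G f hind a _
  have h0 : v ≠ f (Sum.inr 0) := fun h => hv ⟨_, h.symm⟩
  have h1 : v ≠ f (Sum.inr 1) := fun h => hv ⟨_, h.symm⟩
  have h2 : v ≠ f (Sum.inr 2) := fun h => hv ⟨_, h.symm⟩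
  have h01 : f (Sum.inr 0) ≠ f (Sum.inr 1) := fun h => by simpa using hf h
  have h02 : f (Sum.inr 0) ≠ f (Sum.inr 2) := fun h => by simpa using hf h
  have h12 : f (Sum.inr 1) ≠ f (Sum.inr 2) := fun h => by simpa using hf h
  have hcard : ({v, f (Sum.inr 0), f (Sum.inr 1), f (Sum.inr 2)} : Finset V).card = 4 := by
    rw [Finset.card_insert_of_notMem (by simp [h0, h1, h2]),
      Finset.card_insert_of_notMem (by simp [h01, h02]),
      Finset.card_insert_of_notMem (by simp [h12]), Finset.card_singleton]
  have hle := Finset.card_le_card hsub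
  rw [hcard, SimpleGraph.card_neighborFinset_eq_degree] at hle
  exact absurd (hle.trans (hdeg _)) (by norm_num)

lemma aux_adj_inl_inl {u v : {v : V // v ∉ Set.range f}} :
    (SimpleGraph.fromRel
      (fun a b : {v : V // v ∉ Set.range f} ⊕ Unit =>
        (∃ a' b', a = Sum.inl a' ∧ b = Sum.inl b' ∧ G.Adj a'.1 b'.1) ∨
        (∃ a', a = Sum.inl a' ∧ b = Sum.inr () ∧ ∃ w ∈ Set.range f, G.Adj a'.1 w))).Adj
      (Sum.inl u) (Sum.inl v) ↔ u ≠ v ∧ G.Adj u.1 v.1 := by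
  rw [SimpleGraph.fromRel_adj]
  constructor
  · rintro ⟨hne, (⟨a', b', ha, hb, hadj⟩ | ⟨a', ha, hb, _⟩) |
      (⟨a', b', ha, hb, hadj⟩ | ⟨a', ha, hb, _⟩)⟩
    · obtain rfl := Sum.inl.inj ha
      obtain rfl := Sum.inl.inj hb
      exact ⟨fun h => hne (congrArg _ h), hadj⟩
    · exact absurd hb (by simp)
    · obtain rfl := Sum.inl.inj ha
      obtain rfl := Sum.inl.inj hb
      exact ⟨fun h => hne (congrArg _ h), hadj.symm⟩
    · exact absurd hb (by simp)
  · rintro ⟨hne, hadj⟩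
    exact ⟨fun h => hne (Sum.inl.inj h), Or.inl (Or.inl ⟨u, v, rfl, rfl, hadj⟩)⟩

lemma aux_adj_inl_inr {u : {v : V // v ∉ Set.range f}} :
    (SimpleGraph.fromRel
      (fun a b : {v : V // v ∉ Set.range f} ⊕ Unit =>
        (∃ a' b', a = Sum.inl a' ∧ b = Sum.inl b' ∧ G.Adj a'.1 b'.1) ∨
        (∃ a', a = Sum.inl a' ∧ b = Sum.inr () ∧ ∃ w ∈ Set.range f, G.Adj a'.1 w))).Adj
      (Sum.inl u) (Sum.inr ()) ↔ ∃ w ∈ Set.range f, G.Adj u.1 w := by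
  rw [SimpleGraph.fromRel_adj]
  constructor
  · rintro ⟨hne, (⟨a', b', ha, hb, hadj⟩ | ⟨a', ha, hb, hw⟩) |
      (⟨a', b', ha, hb, hadj⟩ | ⟨a', ha, hb, hw⟩)⟩
    · exact absurd hb (by simp)
    · obtain rfl := Sum.inl.inj ha
      exact hw
    · exact absurd ha (by simp)
    · exact absurd ha (by simp)
  · intro hw
    exact ⟨by simp, Or.inl (Or.inr ⟨u, rfl, rfl, hw⟩)⟩

end Basic

section Steps

variable {V : Type*} [Fintype V] [DecidableEq V]
    (G : SimpleGraph V) [DecidableRel G.Adj]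
    (f : Fin 2 ⊕ Fin 3 → V)

lemma stepA (hdeg : ∀ v, G.degree v ≤ 3) (hf : Function.Injective f)
    (hind : ∀ i j, G.Adj (f i) (f j) ↔
      ((∃ a b, i = Sum.inl a ∧ j = Sum.inr b) ∨ (∃ a b, i = Sum.inr a ∧ j = Sum.inl b))) (s : Finset ({v : V // v ∉ Set.range f} ⊕ Unit))
    (hs : IsIndepSet (SimpleGraph.fromRel
      (fun a b : {v : V // v ∉ Set.range f} ⊕ Unit =>
        (∃ a' b', a = Sum.inl a' ∧ b = Sum.inl b' ∧ G.Adj a'.1 b'.1) ∨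
        (∃ a', a = Sum.inl a' ∧ b = Sum.inr () ∧ ∃ w ∈ Set.range f, G.Adj a'.1 w))) ↑s) :
    ∃ t : Finset V, IsIndepSet G ↑t ∧ t.card = s.card + 2 := by
  classical
  by_cases hz : (Sum.inr () : {v : V // v ∉ Set.range f} ⊕ Unit) ∈ s
  · -- z ∈ s : add the three y's
    set s' := s.erase (Sum.inr ()) with hs'def
    have hall : ∀ w ∈ s', ∃ u, w = Sum.inl u := by
      intro w hw
      match w with
      | Sum.inl u => exact ⟨u, rfl⟩
      | Sum.inr () => exact absurd rfl (Finset.mem_erase.1 hw).1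
    set g : ({v : V // v ∉ Set.range f} ⊕ Unit) → V :=
      Sum.elim Subtype.val (fun _ => f (Sum.inl 0)) with hg
    have himv : ∀ v ∈ s'.image g, v ∉ Set.range f := by
      intro v hv
      obtain ⟨w, hw, rfl⟩ := Finset.mem_image.1 hv
      obtain ⟨u, rfl⟩ := hall w hw
      exact u.2
    have hinj : Set.InjOn g ↑s' := by
      intro a ha b hb h
      obtain ⟨u, rfl⟩ := hall a (Finset.mem_coe.1 ha)
      obtain ⟨v, rfl⟩ := hall b (Finset.mem_coe.1 hb)
      simp only [hg, Sum.elim_inl] at h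
      exact congrArg Sum.inl (Subtype.ext h)
    have him_im : ∀ wa ∈ s', ∀ wb ∈ s', g wa ≠ g wb → ¬ G.Adj (g wa) (g wb) := by
      intro wa hwa wb hwb hne hadj
      obtain ⟨u, rfl⟩ := hall wa hwa
      obtain ⟨v, rfl⟩ := hall wb hwb
      simp only [hg, Sum.elim_inl] at hne hadj
      exact hs (Finset.mem_coe.2 (Finset.mem_of_mem_erase hwa))
        (Finset.mem_coe.2 (Finset.mem_of_mem_erase hwb))
        (fun h => hne (congrArg _ (Sum.inl.inj h)))
        ((aux_adj_inl_inl G f).2 ⟨fun h => hne (congrArg _ h), hadj⟩)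
    have him_y : ∀ wa ∈ s', ∀ (b : Fin 3), ¬ G.Adj (g wa) (f (Sum.inr b)) := by
      intro wa hwa b hadj
      obtain ⟨u, rfl⟩ := hall wa hwa
      simp only [hg, Sum.elim_inl] at hadj
      exact hs (Finset.mem_coe.2 (Finset.mem_of_mem_erase hwa)) (Finset.mem_coe.2 hz)
        (by simp) ((aux_adj_inl_inr G f).2 ⟨f (Sum.inr b), ⟨_, rfl⟩, hadj⟩)
    refine ⟨s'.image g ∪ {f (Sum.inr 0), f (Sum.inr 1), f (Sum.inr 2)}, ?_, ?_⟩
    · intro a ha b hb hne hadj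
      simp only [Finset.coe_union, Set.mem_union, Finset.mem_coe, Finset.mem_image,
        Finset.coe_insert, Set.mem_insert_iff, Finset.coe_singleton,
        Set.mem_singleton_iff] at ha hb
      rcases ha with ⟨wa, hwa, rfl⟩ | rfl | rfl | rfl <;>
        rcases hb with ⟨wb, hwb, rfl⟩ | rfl | rfl | rfl <;>
        first
          | exact him_im _ hwa _ hwb hne hadj
          | exact him_y _ hwa _ hadj
          | exact him_y _ hwb _ hadj.symm
          | exact aux_hyy G f hind _ _ hadj
    · have hdisj : Disjoint (s'.image g)
          ({f (Sum.inr 0), f (Sum.inr 1), f (Sum.inr 2)} : Finset V) := by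
        rw [Finset.disjoint_left]
        intro v hv hvt
        apply himv v hv
        simp only [Finset.mem_insert, Finset.mem_singleton] at hvt
        rcases hvt with rfl | rfl | rfl <;> exact ⟨_, rfl⟩
      have h01 : f (Sum.inr 0) ≠ f (Sum.inr 1) := fun h => by simpa using hf h
      have h02 : f (Sum.inr 0) ≠ f (Sum.inr 2) := fun h => by simpa using hf h
      have h12 : f (Sum.inr 1) ≠ f (Sum.inr 2) := fun h => by simpa using hf h
      have hc3 : ({f (Sum.inr 0), f (Sum.inr 1), f (Sum.inr 2)} : Finset V).card = 3 := by
        rw [Finset.card_insert_of_notMem (by simp [h01, h02]),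
          Finset.card_insert_of_notMem (by simp [h12]), Finset.card_singleton]
      have hb1 : 1 ≤ s.card := Finset.card_pos.2 ⟨_, hz⟩
      have hce : s'.card = s.card - 1 := by rw [hs'def, Finset.card_erase_of_mem hz]
      rw [Finset.card_union_of_disjoint hdisj, Finset.card_image_of_injOn hinj, hc3, hce]
      omega
  · -- z ∉ s : add the two x's
    have hall : ∀ w ∈ s, ∃ u, w = Sum.inl u := by
      intro w hw
      match w with
      | Sum.inl u => exact ⟨u, rfl⟩
      | Sum.inr () => exact absurd hw hz
    set g : ({v : V // v ∉ Set.range f} ⊕ Unit) → V :=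
      Sum.elim Subtype.val (fun _ => f (Sum.inl 0)) with hg
    have himv : ∀ v ∈ s.image g, v ∉ Set.range f := by
      intro v hv
      obtain ⟨w, hw, rfl⟩ := Finset.mem_image.1 hv
      obtain ⟨u, rfl⟩ := hall w hw
      exact u.2
    have hinj : Set.InjOn g ↑s := by
      intro a ha b hb h
      obtain ⟨u, rfl⟩ := hall a (Finset.mem_coe.1 ha)
      obtain ⟨v, rfl⟩ := hall b (Finset.mem_coe.1 hb)
      simp only [hg, Sum.elim_inl] at h
      exact congrArg Sum.inl (Subtype.ext h)
    have him_im : ∀ wa ∈ s, ∀ wb ∈ s, g wa ≠ g wb → ¬ G.Adj (g wa) (g wb) := by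
      intro wa hwa wb hwb hne hadj
      obtain ⟨u, rfl⟩ := hall wa hwa
      obtain ⟨v, rfl⟩ := hall wb hwb
      simp only [hg, Sum.elim_inl] at hne hadj
      exact hs (Finset.mem_coe.2 hwa) (Finset.mem_coe.2 hwb)
        (fun h => hne (congrArg _ (Sum.inl.inj h)))
        ((aux_adj_inl_inl G f).2 ⟨fun h => hne (congrArg _ h), hadj⟩)
    have him_x : ∀ wa ∈ s, ∀ (a : Fin 2), ¬ G.Adj (g wa) (f (Sum.inl a)) := by
      intro wa hwa a hadj
      obtain ⟨u, rfl⟩ := hall wa hwa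
      simp only [hg, Sum.elim_inl] at hadj
      exact aux_hxout G f hdeg hf hind a u.1 u.2 hadj.symm
    refine ⟨s.image g ∪ {f (Sum.inl 0), f (Sum.inl 1)}, ?_, ?_⟩
    · intro a ha b hb hne hadj
      simp only [Finset.coe_union, Set.mem_union, Finset.mem_coe, Finset.mem_image,
        Finset.coe_insert, Set.mem_insert_iff, Finset.coe_singleton,
        Set.mem_singleton_iff] at ha hb
      rcases ha with ⟨wa, hwa, rfl⟩ | rfl | rfl <;>
        rcases hb with ⟨wb, hwb, rfl⟩ | rfl | rfl <;>
        first
          | exact him_im _ hwa _ hwb hne hadj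
          | exact him_x _ hwa _ hadj
          | exact him_x _ hwb _ hadj.symm
          | exact aux_hxx G f hind _ _ hadj
    · have hdisj : Disjoint (s.image g) ({f (Sum.inl 0), f (Sum.inl 1)} : Finset V) := by
        rw [Finset.disjoint_left]
        intro v hv hvt
        apply himv v hv
        simp only [Finset.mem_insert, Finset.mem_singleton] at hvt
        rcases hvt with rfl | rfl <;> exact ⟨_, rfl⟩
      have h01 : f (Sum.inl 0) ≠ f (Sum.inl 1) := fun h => by simpa using hf h
      have hc2 : ({f (Sum.inl 0), f (Sum.inl 1)} : Finset V).card = 2 := by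
        rw [Finset.card_insert_of_notMem (by simp [h01]), Finset.card_singleton]
      rw [Finset.card_union_of_disjoint hdisj, Finset.card_image_of_injOn hinj, hc2]


lemma stepB (hdeg : ∀ v, G.degree v ≤ 3) (hf : Function.Injective f)
    (hind : ∀ i j, G.Adj (f i) (f j) ↔
      ((∃ a b, i = Sum.inl a ∧ j = Sum.inr b) ∨ (∃ a b, i = Sum.inr a ∧ j = Sum.inl b)))
    (t : Finset V) (ht : IsIndepSet G ↑t) :
    ∃ s : Finset ({v : V // v ∉ Set.range f} ⊕ Unit),
      IsIndepSet (SimpleGraph.fromRel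
      (fun a b : {v : V // v ∉ Set.range f} ⊕ Unit =>
        (∃ a' b', a = Sum.inl a' ∧ b = Sum.inl b' ∧ G.Adj a'.1 b'.1) ∨
        (∃ a', a = Sum.inl a' ∧ b = Sum.inr () ∧ ∃ w ∈ Set.range f, G.Adj a'.1 w))) ↑s ∧
      t.card ≤ s.card + 2 := by
  classical
  set K : Finset V := Finset.univ.image f with hK
  have hmemK : ∀ v, v ∈ K ↔ v ∈ Set.range f := by
    intro v
    simp [hK, Set.mem_range]
  set s0 : Finset ({v : V // v ∉ Set.range f} ⊕ Unit) :=
    (t \ K).attach.image (fun v => Sum.inl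
      ⟨v.1, fun hr => (Finset.mem_sdiff.1 v.2).2 ((hmemK v.1).2 hr)⟩) with hs0
  have hs0card : s0.card = (t \ K).card := by
    rw [hs0, Finset.card_image_of_injective _ (fun a b h => by
      apply Subtype.ext
      simpa using h), Finset.card_attach]
  have hs0mem : ∀ w ∈ s0, ∃ u, w = Sum.inl u ∧ u.1 ∈ t := by
    intro w hw
    rw [hs0] at hw
    obtain ⟨v, hv, rfl⟩ := Finset.mem_image.1 hw
    exact ⟨_, rfl, (Finset.mem_sdiff.1 v.2).1⟩
  have hs0indep : IsIndepSet (SimpleGraph.fromRel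
      (fun a b : {v : V // v ∉ Set.range f} ⊕ Unit =>
        (∃ a' b', a = Sum.inl a' ∧ b = Sum.inl b' ∧ G.Adj a'.1 b'.1) ∨
        (∃ a', a = Sum.inl a' ∧ b = Sum.inr () ∧ ∃ w ∈ Set.range f, G.Adj a'.1 w))) ↑s0 := by
    intro a ha b hb hne hadj
    obtain ⟨u, rfl, hu⟩ := hs0mem a (Finset.mem_coe.1 ha)
    obtain ⟨v, rfl, hv⟩ := hs0mem b (Finset.mem_coe.1 hb)
    have h2 := (aux_adj_inl_inl G f).1 hadj
    exact ht (Finset.mem_coe.2 hu) (Finset.mem_coe.2 hv)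
      (fun h => h2.1 (Subtype.ext h)) h2.2
  have hsplit : (t \ K).card + (t ∩ K).card = t.card := Finset.card_sdiff_add_card_inter t K
  by_cases hy3 : ∀ b : Fin 3, f (Sum.inr b) ∈ t
  · -- all three y's in t; take s0 ∪ {z}
    have hiK : t ∩ K = {f (Sum.inr 0), f (Sum.inr 1), f (Sum.inr 2)} := by
      ext v
      simp only [Finset.mem_inter, Finset.mem_insert, Finset.mem_singleton]
      constructor
      · rintro ⟨hvt, hvK⟩
        obtain ⟨i, rfl⟩ := (hmemK _).1 hvK
        match i with
        | Sum.inl a =>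
          exact absurd (aux_hxy G f hind a 0)
            (ht (Finset.mem_coe.2 hvt) (Finset.mem_coe.2 (hy3 0))
              (fun h => by simpa using hf h))
        | Sum.inr b =>
          fin_cases b
          · exact Or.inl rfl
          · exact Or.inr (Or.inl rfl)
          · exact Or.inr (Or.inr rfl)
      · rintro (rfl | rfl | rfl) <;> exact ⟨hy3 _, (hmemK _).2 ⟨_, rfl⟩⟩
    have h01 : f (Sum.inr 0) ≠ f (Sum.inr 1) := fun h => by simpa using hf h
    have h02 : f (Sum.inr 0) ≠ f (Sum.inr 2) := fun h => by simpa using hf h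
    have h12 : f (Sum.inr 1) ≠ f (Sum.inr 2) := fun h => by simpa using hf h
    have hc3 : (t ∩ K).card = 3 := by
      rw [hiK, Finset.card_insert_of_notMem (by simp [h01, h02]),
        Finset.card_insert_of_notMem (by simp [h12]), Finset.card_singleton]
    have hzcase : ∀ (u : {v : V // v ∉ Set.range f}), u.1 ∈ t →
        ¬ (SimpleGraph.fromRel
      (fun a b : {v : V // v ∉ Set.range f} ⊕ Unit =>
        (∃ a' b', a = Sum.inl a' ∧ b = Sum.inl b' ∧ G.Adj a'.1 b'.1) ∨
        (∃ a', a = Sum.inl a' ∧ b = Sum.inr () ∧ ∃ w ∈ Set.range f, G.Adj a'.1 w))).Adj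
        (Sum.inl u) (Sum.inr ()) := by
      intro u hu hadj
      obtain ⟨w, ⟨i, rfl⟩, hw⟩ := (aux_adj_inl_inr G f).1 hadj
      match i with
      | Sum.inl a => exact aux_hxout G f hdeg hf hind a u.1 u.2 hw.symm
      | Sum.inr b =>
        exact ht (Finset.mem_coe.2 hu) (Finset.mem_coe.2 (hy3 b))
          (fun h => u.2 (h ▸ ⟨_, rfl⟩)) hw
    refine ⟨insert (Sum.inr ()) s0, ?_, ?_⟩
    · intro a ha b hb hne hadj
      simp only [Finset.coe_insert, Set.mem_insert_iff, Finset.mem_coe] at ha hb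
      rcases ha with rfl | ha <;> rcases hb with rfl | hb
      · exact hne rfl
      · obtain ⟨v, rfl, hv⟩ := hs0mem b hb
        exact hzcase v hv hadj.symm
      · obtain ⟨u, rfl, hu⟩ := hs0mem a ha
        exact hzcase u hu hadj
      · exact hs0indep (Finset.mem_coe.2 ha) (Finset.mem_coe.2 hb) hne hadj
    · have hzns0 : (Sum.inr () : {v : V // v ∉ Set.range f} ⊕ Unit) ∉ s0 := by
        intro h
        obtain ⟨u, heq, -⟩ := hs0mem _ h
        simp at heq
      rw [Finset.card_insert_of_notMem hzns0, hs0card]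
      omega
  · -- not all y's in t: |t ∩ K| ≤ 2, take s0
    push_neg at hy3
    obtain ⟨b0, hb0⟩ := hy3
    have hc2 : (t ∩ K).card ≤ 2 := by
      by_cases hx : ∃ a : Fin 2, f (Sum.inl a) ∈ t
      · obtain ⟨a0, ha0⟩ := hx
        have hsub : t ∩ K ⊆ {f (Sum.inl 0), f (Sum.inl 1)} := by
          intro v hv
          obtain ⟨hvt, hvK⟩ := Finset.mem_inter.1 hv
          obtain ⟨i, rfl⟩ := (hmemK _).1 hvK
          match i with
          | Sum.inl a =>
            fin_cases a
            · exact Finset.mem_insert_self _ _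
            · exact Finset.mem_insert_of_mem (Finset.mem_singleton_self _)
          | Sum.inr b =>
            exact absurd (aux_hxy G f hind a0 b)
              (ht (Finset.mem_coe.2 ha0) (Finset.mem_coe.2 hvt)
                (fun h => by simpa using hf h))
        exact (Finset.card_le_card hsub).trans
          ((Finset.card_insert_le _ _).trans (by simp))
      · push_neg at hx
        have hsub : t ∩ K ⊆
            (Finset.univ.image fun b : Fin 3 => f (Sum.inr b)).erase (f (Sum.inr b0)) := by
          intro v hv
          obtain ⟨hvt, hvK⟩ := Finset.mem_inter.1 hv
          obtain ⟨i, rfl⟩ := (hmemK _).1 hvK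
          match i with
          | Sum.inl a => exact absurd hvt (hx a)
          | Sum.inr b =>
            exact Finset.mem_erase.2 ⟨fun h => hb0 (h ▸ hvt),
              Finset.mem_image.2 ⟨b, Finset.mem_univ _, rfl⟩⟩
        have him : (Finset.univ.image fun b : Fin 3 => f (Sum.inr b)).card ≤ 3 :=
          Finset.card_image_le.trans (by simp)
        have hmem : f (Sum.inr b0) ∈ Finset.univ.image fun b : Fin 3 => f (Sum.inr b) :=
          Finset.mem_image.2 ⟨b0, Finset.mem_univ _, rfl⟩
        have := Finset.card_le_card hsub
        rw [Finset.card_erase_of_mem hmem] at this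
        omega
    exact ⟨s0, hs0indep, by omega⟩


end Steps

/-- `K_{2,3}`-struction: in a subcubic graph, replacing an induced `K_{2,3}` with vertex
set `K` by a single new vertex `z` adjacent to all of `N(K) \ K` decreases the
independence number by exactly 2. -/
theorem K23_struction {V : Type*} [Fintype V] [DecidableEq V]
    (G : SimpleGraph V) [DecidableRel G.Adj]
    (hdeg : ∀ v, G.degree v ≤ 3)
    (f : Fin 2 ⊕ Fin 3 → V) (hf : Function.Injective f)
    (hind : ∀ i j, G.Adj (f i) (f j) ↔
      ((∃ a b, i = Sum.inl a ∧ j = Sum.inr b) ∨ (∃ a b, i = Sum.inr a ∧ j = Sum.inl b))) :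
    indepNum (SimpleGraph.fromRel
      (fun a b : {v : V // v ∉ Set.range f} ⊕ Unit =>
        (∃ a' b', a = Sum.inl a' ∧ b = Sum.inl b' ∧ G.Adj a'.1 b'.1) ∨
        (∃ a', a = Sum.inl a' ∧ b = Sum.inr () ∧ ∃ w ∈ Set.range f, G.Adj a'.1 w)))
    = indepNum G - 2 := by
  classical
  haveI : Fintype ({v : V // v ∉ Set.range f} ⊕ Unit) := Fintype.ofFinite _
  obtain ⟨s', hs', hcs'⟩ := exists_indepNum (SimpleGraph.fromRel
      (fun a b : {v : V // v ∉ Set.range f} ⊕ Unit =>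
        (∃ a' b', a = Sum.inl a' ∧ b = Sum.inl b' ∧ G.Adj a'.1 b'.1) ∨
        (∃ a', a = Sum.inl a' ∧ b = Sum.inr () ∧ ∃ w ∈ Set.range f, G.Adj a'.1 w)))
  obtain ⟨t, ht, hct⟩ := exists_indepNum G
  obtain ⟨t2, ht2, hct2⟩ := stepA G f hdeg hf hind s' hs'
  obtain ⟨s2, hs2, hle⟩ := stepB G f hdeg hf hind t ht
  have h1 : s'.card + 2 ≤ indepNum G := hct2 ▸ card_le_indepNum G ht2
  have h2 : s2.card ≤ indepNum (SimpleGraph.fromRel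
      (fun a b : {v : V // v ∉ Set.range f} ⊕ Unit =>
        (∃ a' b', a = Sum.inl a' ∧ b = Sum.inl b' ∧ G.Adj a'.1 b'.1) ∨
        (∃ a', a = Sum.inl a' ∧ b = Sum.inr () ∧ ∃ w ∈ Set.range f, G.Adj a'.1 w))) :=
    card_le_indepNum _ hs2
  omega
end

section
/- Fix integers k ≥ 3 and p ≥ 3k. Let G be a subcubic graph with no induced apple with a long stem A*_t for any t ≥ k. Suppose G contains an induced extended cycle C* of length p (an induced cycle v_1,...,v_p plus two vertices 5, 6 such that 6 is adjacent to v_1 and 5, and 5 is adjacent to v_4 and 6, where we label 1=v_1, 2=v_2, 3=v_3, 4=v_4, and 5, 6 have no other neighbours in C*). Let x be a vertex outside C* adjacent to vertex 2. Then x has at least two neighbours in {2,3,5,6}. -/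
/-- `c` lists the vertices of an induced (chordless) cycle of `G` in order:
`c` is injective and two listed vertices are adjacent iff they are consecutive
(cyclically, i.e. modulo `p`). -/
def IsIndCycle {V : Type*} {p : ℕ} (G : SimpleGraph V) (c : Fin p → V) : Prop :=
  Function.Injective c ∧
    ∀ i j : Fin p, G.Adj (c i) (c j) ↔ ((i.val + 1) % p = j.val ∨ (j.val + 1) % p = i.val)

/-- `G` contains an induced apple with a long stem `A*_t`: an induced cycle of
length `t`, a stem vertex `s` with exactly one neighbour on the cycle, and an
extra vertex `w` adjacent to the stem only. -/
def HasAppleLongStem {V : Type*} (G : SimpleGraph V) (t : ℕ) : Prop :=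
  ∃ c : Fin t → V, IsIndCycle G c ∧
    ∃ s w : V, (∀ i, s ≠ c i) ∧ (∀ i, w ≠ c i) ∧ s ≠ w ∧
      (∃ i₀, G.Adj s (c i₀) ∧ ∀ i, G.Adj s (c i) → i = i₀) ∧
      G.Adj s w ∧ (∀ i, ¬ G.Adj w (c i))

private lemma mod_inj' {p u v : ℕ} (h : u % p = v % p) (huv : u ≤ v) (hlt : v - u < p) : u = v := by
  have hd : p ∣ v - u := (Nat.modEq_iff_dvd' huv).mp h
  have := Nat.eq_zero_of_dvd_of_lt hd hlt
  omega

private lemma mod_cases' {p u r : ℕ} (hr : r < p) (h : u % p = r) :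
    u = r ∨ u = r + p ∨ r + 2*p ≤ u := by
  have hq : u / p = 0 ∨ u / p = 1 ∨ 2 ≤ u / p := by
    rcases Nat.lt_or_ge (u/p) 1 with h1 | h1
    · exact Or.inl (Nat.lt_one_iff.mp h1)
    rcases Nat.lt_or_ge (u/p) 2 with h2 | h2
    · exact Or.inr (Or.inl (Nat.le_antisymm (Nat.lt_succ_iff.mp h2) h1))
    · exact Or.inr (Or.inr h2)
  have h0 : p * (u / p) + u % p = u := Nat.div_add_mod u p
  rcases hq with hq | hq | hq
  · rw [hq, Nat.mul_zero] at h0; left; omega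
  · rw [hq, Nat.mul_one] at h0; right; left; omega
  · right; right
    have h2 : p * 2 ≤ p * (u / p) := Nat.mul_le_mul_left p hq
    omega

private lemma succ_mod (u p : ℕ) : (u % p + 1) % p = (u + 1) % p :=
  (Nat.mod_modEq u p).add_right 1

private lemma four_le_degree {V : Type*} [Fintype V] [DecidableEq V] (G : SimpleGraph V)
    [DecidableRel G.Adj]
    (v a b c d : V) (hab : a ≠ b) (hac : a ≠ c) (had : a ≠ d) (hbc : b ≠ c) (hbd : b ≠ d)
    (hcd : c ≠ d)
    (ha : G.Adj v a) (hb : G.Adj v b) (hc : G.Adj v c) (hd : G.Adj v d) : 4 ≤ G.degree v := by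
  have hsub : ({a, b, c, d} : Finset V) ⊆ G.neighborFinset v := by
    intro y hy
    simp only [Finset.mem_insert, Finset.mem_singleton] at hy
    rw [SimpleGraph.mem_neighborFinset]
    rcases hy with rfl | rfl | rfl | rfl <;> assumption
  have hcard : ({a, b, c, d} : Finset V).card = 4 := by
    rw [Finset.card_insert_of_notMem (by simp [hab, hac, had]),
        Finset.card_insert_of_notMem (by simp [hbc, hbd]),
        Finset.card_insert_of_notMem (by simp [hcd]), Finset.card_singleton]
  have hle := Finset.card_le_card hsub
  rw [hcard] at hle
  rwa [SimpleGraph.degree]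

private lemma arc_cycle {V : Type*} (G : SimpleGraph V) {p : ℕ} (hp0 : 0 < p)
    (c : Fin p → V) (hc : IsIndCycle G c) (x : V) (hx : ∀ i, x ≠ c i) (a t : ℕ)
    (ht4 : 4 ≤ t) (htp : t - 1 < p)
    (hEnd1 : G.Adj x (c ⟨a % p, Nat.mod_lt _ hp0⟩))
    (hEnd2 : G.Adj x (c ⟨(a + t - 2) % p, Nat.mod_lt _ hp0⟩))
    (hInt : ∀ m, 1 ≤ m → m ≤ t - 3 → ¬ G.Adj x (c ⟨(a + m) % p, Nat.mod_lt _ hp0⟩)) :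
    IsIndCycle G (fun m : Fin t =>
      if m.val = 0 then x else c ⟨(a + m.val - 1) % p, Nat.mod_lt _ hp0⟩) := by
  obtain ⟨hcinj, hcadj⟩ := hc
  have hmodinj : ∀ u v : ℕ, a ≤ u → a ≤ v → u ≤ a + (p-1) → v ≤ a + (p-1) →
      u % p = v % p → u = v := by
    intro u v hu hv hu2 hv2 h
    rcases le_total u v with hle | hle
    · exact mod_inj' h hle (by omega)
    · exact (mod_inj' h.symm hle (by omega)).symm
  have keyAdj : ∀ n : ℕ, 1 ≤ n → n ≤ t - 1 →
      (G.Adj x (c ⟨(a + n - 1) % p, Nat.mod_lt _ hp0⟩) ↔ (n = 1 ∨ n = t - 1)) := by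
    intro n h1 h2
    constructor
    · intro h
      by_contra hcon
      push_neg at hcon
      refine hInt (n - 1) (by omega) (by omega) ?_
      have e : a + (n - 1) = a + n - 1 := by omega
      rw [e]; exact h
    · rintro (h | h)
      · have e : a + n - 1 = a := by omega
        rw [e]; exact hEnd1
      · have e : a + n - 1 = a + t - 2 := by omega
        rw [e]; exact hEnd2
  have hwrap : ∀ n : ℕ, 1 ≤ n → n ≤ t - 1 → ((n + 1) % t = 0 ↔ n = t - 1) := by
    intro n h1 h2
    constructor
    · intro h
      rcases Nat.lt_or_ge (n+1) t with hlt | hge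
      · rw [Nat.mod_eq_of_lt hlt] at h; omega
      · omega
    · intro h; subst h
      have e : t - 1 + 1 = t := by omega
      rw [e, Nat.mod_self]
  have harc : ∀ u v : ℕ, 1 ≤ u → u ≤ t-1 → 1 ≤ v → v ≤ t-1 →
      ((a + u) % p = (a + v - 1) % p ↔ u + 1 = v) := by
    intro u v h1 h2 h3 h4
    constructor
    · intro h
      have := hmodinj (a+u) (a+v-1) (by omega) (by omega) (by omega) (by omega) h
      omega
    · intro h; congr 1; omega
  have hfin : ∀ u v : ℕ, 1 ≤ u → u ≤ t-1 → 1 ≤ v → v ≤ t-1 → ((u+1)%t = v ↔ u + 1 = v) := by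
    intro u v h1 h2 h3 h4
    rcases Nat.lt_or_ge (u+1) t with hlt | hge
    · rw [Nat.mod_eq_of_lt hlt]
    · have e : u + 1 = t := by omega
      rw [e, Nat.mod_self]; omega
  constructor
  · intro i j hij
    have hi2 := i.isLt; have hj2 := j.isLt
    simp only at hij
    by_cases hi : i.val = 0 <;> by_cases hj : j.val = 0
    · exact Fin.ext (by omega)
    · rw [if_pos hi, if_neg hj] at hij; exact absurd hij (hx _)
    · rw [if_neg hi, if_pos hj] at hij; exact absurd hij.symm (hx _)
    · rw [if_neg hi, if_neg hj] at hij
      have h2 := hcinj hij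
      have h3 : (a + i.val - 1) % p = (a + j.val - 1) % p := congrArg Fin.val h2
      have h4 := hmodinj (a + i.val - 1) (a + j.val - 1) (by omega) (by omega) (by omega)
        (by omega) h3
      exact Fin.ext (by omega)
  · intro i j
    have hi2 := i.isLt; have hj2 := j.isLt
    by_cases hi : i.val = 0 <;> by_cases hj : j.val = 0
    · simp only [if_pos hi, if_pos hj]
      rw [hi, hj]
      constructor
      · intro h; exact absurd h (G.irrefl)
      · rintro (h | h) <;> (rw [Nat.mod_eq_of_lt (by omega : 0+1 < t)] at h; omega)
    · simp only [if_pos hi, if_neg hj]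
      rw [keyAdj j.val (by omega) (by omega), hi]
      rw [Nat.mod_eq_of_lt (by omega : 0+1 < t), hwrap j.val (by omega) (by omega)]
      omega
    · simp only [if_neg hi, if_pos hj]
      rw [G.adj_comm, keyAdj i.val (by omega) (by omega), hj]
      rw [Nat.mod_eq_of_lt (by omega : 0+1 < t), hwrap i.val (by omega) (by omega)]
      omega
    · simp only [if_neg hi, if_neg hj]
      rw [hcadj]
      simp only []
      rw [succ_mod, succ_mod]
      have e1 : a + i.val - 1 + 1 = a + i.val := by omega
      have e2 : a + j.val - 1 + 1 = a + j.val := by omega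
      rw [e1, e2]
      rw [harc i.val j.val (by omega) (by omega) (by omega) (by omega),
          harc j.val i.val (by omega) (by omega) (by omega) (by omega),
          hfin i.val j.val (by omega) (by omega) (by omega) (by omega),
          hfin j.val i.val (by omega) (by omega) (by omega) (by omega)]

private lemma cstar_cycle {V : Type*} (G : SimpleGraph V) {p : ℕ} (hp9 : 9 ≤ p)
    (c : Fin p → V) (hc : IsIndCycle G c) (u5 u6 : V) (h56 : u5 ≠ u6)
    (hu5c : ∀ i, u5 ≠ c i) (hu6c : ∀ i, u6 ≠ c i)
    (h65 : G.Adj u6 u5)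
    (h61 : G.Adj u6 (c ⟨0, by omega⟩)) (h54 : G.Adj u5 (c ⟨3, by omega⟩))
    (h6only : ∀ i, G.Adj u6 (c i) → i = ⟨0, by omega⟩)
    (h5only : ∀ i, G.Adj u5 (c i) → i = ⟨3, by omega⟩) :
    IsIndCycle G (fun m : Fin p => if m.val = 1 then u6 else if m.val = 2 then u5 else c m) := by
  obtain ⟨hcinj, hcadj⟩ := hc
  have L6 : ∀ j : Fin p, j.val ≠ 1 → j.val ≠ 2 → (G.Adj u6 (c j) ↔ j.val = 0) := by
    intro j hj1 hj2
    constructor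
    · intro h; exact congrArg Fin.val (h6only j h)
    · intro h
      have e : j = ⟨0, by omega⟩ := Fin.ext h
      rw [e]; exact h61
  have L5 : ∀ j : Fin p, j.val ≠ 1 → j.val ≠ 2 → (G.Adj u5 (c j) ↔ j.val = 3) := by
    intro j hj1 hj2
    constructor
    · intro h; exact congrArg Fin.val (h5only j h)
    · intro h
      have e : j = ⟨3, by omega⟩ := Fin.ext h
      rw [e]; exact h54
  have R1 : ∀ n : ℕ, n < p → n ≠ 1 → n ≠ 2 → (((1+1)%p = n ∨ (n+1)%p = 1) ↔ n = 0) := by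
    intro n hn h1 h2
    constructor
    · rintro (h | h)
      · rw [Nat.mod_eq_of_lt (by omega)] at h; omega
      · by_cases hcs : n + 1 = p
        · rw [hcs, Nat.mod_self] at h; omega
        · rw [Nat.mod_eq_of_lt (by omega)] at h; omega
    · intro h; right; rw [h]; exact Nat.mod_eq_of_lt (by omega)
  have R2 : ∀ n : ℕ, n < p → n ≠ 1 → n ≠ 2 → (((2+1)%p = n ∨ (n+1)%p = 2) ↔ n = 3) := by
    intro n hn h1 h2
    constructor
    · rintro (h | h)
      · rw [Nat.mod_eq_of_lt (by omega)] at h; omega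
      · by_cases hcs : n + 1 = p
        · rw [hcs, Nat.mod_self] at h; omega
        · rw [Nat.mod_eq_of_lt (by omega)] at h; omega
    · intro h; left; rw [h]; exact Nat.mod_eq_of_lt (by omega)
  constructor
  · intro i j h
    simp only at h
    by_cases hi1 : i.val = 1 <;> by_cases hj1 : j.val = 1
    · exact Fin.ext (by omega)
    · rw [if_pos hi1, if_neg hj1] at h
      by_cases hj2 : j.val = 2
      · rw [if_pos hj2] at h; exact absurd h.symm h56
      · rw [if_neg hj2] at h; exact absurd h (hu6c j)
    · rw [if_neg hi1, if_pos hj1] at h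
      by_cases hi2 : i.val = 2
      · rw [if_pos hi2] at h; exact absurd h h56
      · rw [if_neg hi2] at h; exact absurd h.symm (hu6c i)
    · rw [if_neg hi1, if_neg hj1] at h
      by_cases hi2 : i.val = 2 <;> by_cases hj2 : j.val = 2
      · exact Fin.ext (by omega)
      · rw [if_pos hi2, if_neg hj2] at h; exact absurd h (hu5c j)
      · rw [if_neg hi2, if_pos hj2] at h; exact absurd h.symm (hu5c i)
      · rw [if_neg hi2, if_neg hj2] at h; exact hcinj h
  · intro i j
    have hip := i.isLt; have hjp := j.isLt
    simp only
    by_cases hi1 : i.val = 1 <;> by_cases hj1 : j.val = 1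
    · rw [if_pos hi1, if_pos hj1, hi1, hj1]
      constructor
      · intro h; exact absurd h (G.irrefl)
      · rintro (h | h) <;> exact absurd h (by rw [Nat.mod_eq_of_lt (by omega : 1+1 < p)]; omega)
    · by_cases hj2 : j.val = 2
      · rw [if_pos hi1, if_neg hj1, if_pos hj2, hi1, hj2]
        exact iff_of_true h65 (Or.inl (Nat.mod_eq_of_lt (by omega)))
      · rw [if_pos hi1, if_neg hj1, if_neg hj2, hi1, L6 j hj1 hj2]
        exact (R1 j.val hjp hj1 hj2).symm
    · by_cases hi2 : i.val = 2
      · rw [if_neg hi1, if_pos hi2, if_pos hj1, hi2, hj1]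
        exact iff_of_true h65.symm (Or.inr (Nat.mod_eq_of_lt (by omega)))
      · rw [if_neg hi1, if_neg hi2, if_pos hj1, hj1, G.adj_comm, L6 i hi1 hi2, or_comm]
        exact (R1 i.val hip hi1 hi2).symm
    · by_cases hi2 : i.val = 2 <;> by_cases hj2 : j.val = 2
      · rw [if_neg hi1, if_pos hi2, if_neg hj1, if_pos hj2, hi2, hj2]
        constructor
        · intro h; exact absurd h (G.irrefl)
        · rintro (h | h) <;> exact absurd h (by rw [Nat.mod_eq_of_lt (by omega : 2+1 < p)]; omega)
      · rw [if_neg hi1, if_pos hi2, if_neg hj1, if_neg hj2, hi2, L5 j hj1 hj2]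
        exact (R2 j.val hjp hj1 hj2).symm
      · rw [if_neg hi1, if_neg hi2, if_neg hj1, if_pos hj2, hj2, G.adj_comm, L5 i hi1 hi2, or_comm]
        exact (R2 i.val hip hi1 hi2).symm
      · rw [if_neg hi1, if_neg hi2, if_neg hj1, if_neg hj2]
        exact hcadj i j

/-- If a subcubic graph with no induced apple with a long stem `A*_t` (for any `t ≥ k`)
contains an induced extended cycle `C*` of length `p ≥ 3k` (cycle `c` plus the two
extra vertices `u₅, u₆`, labelling `1,2,3,4 = c 0, c 1, c 2, c 3`, `5 = u₅`, `6 = u₆`),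
then any vertex `x` outside `C*` adjacent to vertex `2` has at least two neighbours
in `{2, 3, 5, 6}`. -/
theorem two_neighbours_in_C6 {V : Type*} [Fintype V] (G : SimpleGraph V)
    [DecidableRel G.Adj] (k p : ℕ) (hk : 3 ≤ k) (hp : 3 * k ≤ p)
    (hdeg : ∀ v, G.degree v ≤ 3)
    (hnoapple : ∀ t, k ≤ t → ¬ HasAppleLongStem G t)
    (c : Fin p → V) (hc : IsIndCycle G c)
    (u5 u6 : V) (h56 : u5 ≠ u6)
    (hu5c : ∀ i, u5 ≠ c i) (hu6c : ∀ i, u6 ≠ c i)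
    (h65 : G.Adj u6 u5)
    (h61 : G.Adj u6 (c ⟨0, by omega⟩)) (h54 : G.Adj u5 (c ⟨3, by omega⟩))
    (h6only : ∀ i, G.Adj u6 (c i) → i = ⟨0, by omega⟩)
    (h5only : ∀ i, G.Adj u5 (c i) → i = ⟨3, by omega⟩)
    (x : V) (hxc : ∀ i, x ≠ c i) (hx5 : x ≠ u5) (hx6 : x ≠ u6)
    (hx2 : G.Adj x (c ⟨1, by omega⟩)) :
    ∃ y z : V, y ≠ z ∧
      y ∈ ({c ⟨1, by omega⟩, c ⟨2, by omega⟩, u5, u6} : Set V) ∧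
      z ∈ ({c ⟨1, by omega⟩, c ⟨2, by omega⟩, u5, u6} : Set V) ∧
      G.Adj x y ∧ G.Adj x z := by
  classical
  by_contra hcon
  push_neg at hcon
  have hp9 : 9 ≤ p := by omega
  have hp0 : 0 < p := by omega
  obtain ⟨hcinj, hcadj⟩ := id hc
  have cne' : ∀ (i j : Fin p), i.val ≠ j.val → c i ≠ c j :=
    fun i j hij h => hij (congrArg Fin.val (hcinj h))
  have adjSub : ∀ (y : V) (m n : ℕ) (hm : m < p) (hn : n < p), m = n →
      G.Adj y (c ⟨n, hn⟩) → G.Adj y (c ⟨m, hm⟩) := by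
    intro y m n hm hn h hadj; subst h; exact hadj
  have hadjc : ∀ (m n : ℕ) (hm : m < p) (hn : n < p),
      ((m+1)%p = n ∨ (n+1)%p = m) → G.Adj (c ⟨m,hm⟩) (c ⟨n,hn⟩) :=
    fun m n hm hn h => (hcadj _ _).mpr h
  have mem1 : c ⟨1, by omega⟩ ∈ ({c ⟨1, by omega⟩, c ⟨2, by omega⟩, u5, u6} : Set V) :=
    Set.mem_insert _ _
  have mem2 : c ⟨2, by omega⟩ ∈ ({c ⟨1, by omega⟩, c ⟨2, by omega⟩, u5, u6} : Set V) :=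
    Set.mem_insert_of_mem _ (Set.mem_insert _ _)
  have mem5 : u5 ∈ ({c ⟨1, by omega⟩, c ⟨2, by omega⟩, u5, u6} : Set V) :=
    Set.mem_insert_of_mem _ (Set.mem_insert_of_mem _ (Set.mem_insert _ _))
  have mem6 : u6 ∈ ({c ⟨1, by omega⟩, c ⟨2, by omega⟩, u5, u6} : Set V) :=
    Set.mem_insert_of_mem _ (Set.mem_insert_of_mem _ (Set.mem_insert_of_mem _ rfl))
  have hA2 : ¬ G.Adj x (c ⟨2, by omega⟩) := fun h =>
    hcon _ _ (cne' _ _ (by show (1:ℕ) ≠ 2; omega)) mem1 mem2 hx2 h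
  have hA5 : ¬ G.Adj x u5 := fun h =>
    hcon _ _ (Ne.symm (hu5c _)) mem1 mem5 hx2 h
  have hA6 : ¬ G.Adj x u6 := fun h =>
    hcon _ _ (Ne.symm (hu6c _)) mem1 mem6 hx2 h
  have hA0 : ¬ G.Adj x (c ⟨0, by omega⟩) := by
    intro h
    have hd4 := four_le_degree G (c ⟨0, by omega⟩) (c ⟨1, by omega⟩) (c ⟨p-1, by omega⟩) u6 x
      (cne' _ _ (by show (1:ℕ) ≠ p-1; omega)) (Ne.symm (hu6c _)) (Ne.symm (hxc _))
      (Ne.symm (hu6c _)) (Ne.symm (hxc _)) (Ne.symm hx6)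
      (hadjc 0 1 (by omega) (by omega) (Or.inl (Nat.mod_eq_of_lt (by omega))))
      (hadjc 0 (p-1) (by omega) (by omega)
        (Or.inr (by rw [show p-1+1 = p by omega]; exact Nat.mod_self p)))
      h61.symm h.symm
    have := hdeg (c ⟨0, by omega⟩)
    omega
  have hA3 : ¬ G.Adj x (c ⟨3, by omega⟩) := by
    intro h
    have hd4 := four_le_degree G (c ⟨3, by omega⟩) (c ⟨2, by omega⟩) (c ⟨4, by omega⟩) u5 x
      (cne' _ _ (by show (2:ℕ) ≠ 4; omega)) (Ne.symm (hu5c _)) (Ne.symm (hxc _))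
      (Ne.symm (hu5c _)) (Ne.symm (hxc _)) (Ne.symm hx5)
      (hadjc 3 2 (by omega) (by omega) (Or.inr (Nat.mod_eq_of_lt (by omega))))
      (hadjc 3 4 (by omega) (by omega) (Or.inl (Nat.mod_eq_of_lt (by omega))))
      h54.symm h.symm
    have := hdeg (c ⟨3, by omega⟩)
    omega
  by_cases hS : ∀ j : Fin p, G.Adj x (c j) → j = ⟨1, by omega⟩
  · -- x has no neighbour on the cycle other than c 1: use the modified cycle through u6, u5
    refine hnoapple p (by omega)
      ⟨_, cstar_cycle G hp9 c hc u5 u6 h56 hu5c hu6c h65 h61 h54 h6only h5only,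
        c ⟨1, by omega⟩, x, ?_, ?_, Ne.symm (hxc _), ⟨⟨0, by omega⟩, ?_, ?_⟩, hx2.symm, ?_⟩
    · intro i
      by_cases hi1 : i.val = 1
      · rw [if_pos hi1]; exact Ne.symm (hu6c _)
      · rw [if_neg hi1]
        by_cases hi2 : i.val = 2
        · rw [if_pos hi2]; exact Ne.symm (hu5c _)
        · rw [if_neg hi2]; exact cne' _ _ (by show (1:ℕ) ≠ i.val; omega)
    · intro i
      by_cases hi1 : i.val = 1
      · rw [if_pos hi1]; exact hx6
      · rw [if_neg hi1]
        by_cases hi2 : i.val = 2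
        · rw [if_pos hi2]; exact hx5
        · rw [if_neg hi2]; exact hxc i
    · exact hadjc 1 0 (by omega) (by omega) (Or.inr (Nat.mod_eq_of_lt (by omega)))
    · intro i h
      by_cases hi1 : i.val = 1
      · rw [if_pos hi1] at h
        exact absurd (congrArg Fin.val (h6only _ h.symm)) (by show (1:ℕ) ≠ 0; omega)
      · rw [if_neg hi1] at h
        by_cases hi2 : i.val = 2
        · rw [if_pos hi2] at h
          exact absurd (congrArg Fin.val (h5only _ h.symm)) (by show (1:ℕ) ≠ 3; omega)
        · rw [if_neg hi2] at h
          have hip := i.isLt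
          have h' : (1+1)%p = i.val ∨ (i.val+1)%p = 1 := (hcadj _ _).mp h
          rcases h' with h' | h'
          · rw [Nat.mod_eq_of_lt (by omega)] at h'
            exact absurd h'.symm hi2
          · refine Fin.ext ?_
            show i.val = 0
            by_cases hq : i.val + 1 = p
            · rw [hq, Nat.mod_self] at h'; omega
            · rw [Nat.mod_eq_of_lt (by omega)] at h'; omega
    · intro i
      by_cases hi1 : i.val = 1
      · rw [if_pos hi1]; exact hA6
      · rw [if_neg hi1]
        by_cases hi2 : i.val = 2
        · rw [if_pos hi2]; exact hA5
        · rw [if_neg hi2]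
          intro h
          exact hi1 (congrArg Fin.val (hS i h))
  · push_neg at hS
    obtain ⟨j0, hj0adj, hj0ne⟩ := hS
    set T : Finset (Fin p) :=
      Finset.univ.filter (fun j => G.Adj x (c j) ∧ j ≠ ⟨1, by omega⟩) with hT
    have hj0T : j0 ∈ T := by
      rw [hT, Finset.mem_filter]; exact ⟨Finset.mem_univ _, hj0adj, hj0ne⟩
    have hne : T.Nonempty := ⟨j0, hj0T⟩
    have hTbound : ∀ j ∈ T, 4 ≤ j.val ∧ j.val ≤ p - 1 := by
      intro j hj
      obtain ⟨hadj, hne1⟩ := (Finset.mem_filter.mp hj).2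
      have h0 : j.val ≠ 0 := fun h => hA0 (adjSub x 0 j.val (by omega) j.isLt h.symm hadj)
      have h1 : j.val ≠ 1 := fun h => hne1 (Fin.ext h)
      have h2 : j.val ≠ 2 := fun h => hA2 (adjSub x 2 j.val (by omega) j.isLt h.symm hadj)
      have h3 : j.val ≠ 3 := fun h => hA3 (adjSub x 3 j.val (by omega) j.isLt h.symm hadj)
      have := j.isLt
      omega
    set jm := T.min' hne with hjm
    set jM := T.max' hne with hjM
    have hjmT : jm ∈ T := T.min'_mem hne
    have hjMT : jM ∈ T := T.max'_mem hne
    have hjmadj : G.Adj x (c jm) := (Finset.mem_filter.mp hjmT).2.1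
    have hjMadj : G.Adj x (c jM) := (Finset.mem_filter.mp hjMT).2.1
    obtain ⟨hjm4, hjmp⟩ := hTbound jm hjmT
    obtain ⟨hjM4, hjMp⟩ := hTbound jM hjMT
    have hjmle : ∀ j : Fin p, j ∈ T → jm.val ≤ j.val := fun j hj => Finset.min'_le T j hj
    have hjMge : ∀ j : Fin p, j ∈ T → j.val ≤ jM.val := fun j hj => Finset.le_max' T j hj
    by_cases hb1 : k ≤ jm.val + 1
    · -- short front apple: cycle x, c1, ..., c jm with stem u5 and pendant u6
      refine hnoapple (jm.val + 1) hb1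
        ⟨_, arc_cycle G hp0 c hc x hxc 1 (jm.val + 1) (by omega) (by omega) ?_ ?_ ?_,
          u5, u6, ?_, ?_, h56, ⟨⟨3, by omega⟩, ?_, ?_⟩, h65.symm, ?_⟩
      · exact adjSub x (1 % p) 1 (Nat.mod_lt _ hp0) (by omega)
          (Nat.mod_eq_of_lt (by omega)) hx2
      · refine adjSub x _ jm.val (Nat.mod_lt _ hp0) jm.isLt ?_ hjmadj
        rw [show 1 + (jm.val + 1) - 2 = jm.val by omega]
        exact Nat.mod_eq_of_lt jm.isLt
      · intro m hm1 hm2 hadj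
        have hltp : 1 + m < p := by omega
        have hadj' : G.Adj x (c ⟨1 + m, hltp⟩) :=
          adjSub x (1+m) ((1+m)%p) hltp (Nat.mod_lt _ hp0) (Nat.mod_eq_of_lt hltp).symm hadj
        have hmem : (⟨1+m, hltp⟩ : Fin p) ∈ T := by
          rw [hT, Finset.mem_filter]
          refine ⟨Finset.mem_univ _, hadj', fun hq => ?_⟩
          exact absurd (congrArg Fin.val hq) (by show ¬(1+m = 1); omega)
        have h2 : jm.val ≤ 1 + m := hjmle _ hmem
        omega
      · intro i
        by_cases hi0 : i.val = 0
        · rw [if_pos hi0]; exact Ne.symm hx5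
        · rw [if_neg hi0]; exact hu5c _
      · intro i
        by_cases hi0 : i.val = 0
        · rw [if_pos hi0]; exact Ne.symm hx6
        · rw [if_neg hi0]; exact hu6c _
      · show G.Adj u5 (c ⟨(1 + 3 - 1) % p, Nat.mod_lt _ hp0⟩)
        exact adjSub u5 _ 3 (Nat.mod_lt _ hp0) (by omega)
          (Nat.mod_eq_of_lt (by omega)) h54
      · intro i h
        have hip := i.isLt
        have hjmlt := jm.isLt
        by_cases hi0 : i.val = 0
        · rw [if_pos hi0] at h
          exact absurd h.symm hA5
        · rw [if_neg hi0] at h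
          have hval : (1 + i.val - 1) % p = 3 := congrArg Fin.val (h5only _ h)
          rw [show 1 + i.val - 1 = i.val by omega, Nat.mod_eq_of_lt (by omega)] at hval
          exact Fin.ext hval
      · intro i
        by_cases hi0 : i.val = 0
        · rw [if_pos hi0]; exact fun h => hA6 h.symm
        · rw [if_neg hi0]
          intro h
          have hip := i.isLt
          have hjmlt := jm.isLt
          have hval : (1 + i.val - 1) % p = 0 := congrArg Fin.val (h6only _ h)
          rw [show 1 + i.val - 1 = i.val by omega, Nat.mod_eq_of_lt (by omega)] at hval
          exact hi0 hval
    · by_cases hb2 : k ≤ p - jM.val + 3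
      · -- back apple: cycle x, c jM, ..., c (p-1), c 0, c 1 with stem u6 and pendant u5
        refine hnoapple (p - jM.val + 3) hb2
          ⟨_, arc_cycle G hp0 c hc x hxc jM.val (p - jM.val + 3) (by omega) (by omega) ?_ ?_ ?_,
            u6, u5, ?_, ?_, h56.symm, ⟨⟨p - jM.val + 3 - 2, by omega⟩, ?_, ?_⟩, h65, ?_⟩
        · exact adjSub x (jM.val % p) jM.val (Nat.mod_lt _ hp0) jM.isLt
            (Nat.mod_eq_of_lt jM.isLt) hjMadj
        · refine adjSub x _ 1 (Nat.mod_lt _ hp0) (by omega) ?_ hx2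
          rw [show jM.val + (p - jM.val + 3) - 2 = p + 1 by omega, Nat.add_mod_left]
          exact Nat.mod_eq_of_lt (by omega)
        · intro m hm1 hm2 hadj
          by_cases hq : jM.val + m = p
          · exact hA0 (adjSub x 0 ((jM.val + m) % p) (by omega) (Nat.mod_lt _ hp0)
              (by rw [hq, Nat.mod_self]) hadj)
          · have hltp : jM.val + m < p := by omega
            have hadj' : G.Adj x (c ⟨jM.val + m, hltp⟩) :=
              adjSub x _ _ hltp (Nat.mod_lt _ hp0) (Nat.mod_eq_of_lt hltp).symm hadj
            have hmem : (⟨jM.val + m, hltp⟩ : Fin p) ∈ T := by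
              rw [hT, Finset.mem_filter]
              refine ⟨Finset.mem_univ _, hadj', fun hq2 => ?_⟩
              exact absurd (congrArg Fin.val hq2) (by show ¬(jM.val + m = 1); omega)
            have h6 : jM.val + m ≤ jM.val := hjMge _ hmem
            omega
        · intro i
          by_cases hi0 : i.val = 0
          · rw [if_pos hi0]; exact Ne.symm hx6
          · rw [if_neg hi0]; exact hu6c _
        · intro i
          by_cases hi0 : i.val = 0
          · rw [if_pos hi0]; exact Ne.symm hx5
          · rw [if_neg hi0]; exact hu5c _
        · show G.Adj u6 (if p - jM.val + 3 - 2 = 0 then x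
            else c ⟨(jM.val + (p - jM.val + 3 - 2) - 1) % p, Nat.mod_lt _ hp0⟩)
          rw [if_neg (by omega : ¬(p - jM.val + 3 - 2 = 0))]
          refine adjSub u6 _ 0 (Nat.mod_lt _ hp0) (by omega) ?_ h61
          rw [show jM.val + (p - jM.val + 3 - 2) - 1 = p by omega]
          exact Nat.mod_self p
        · intro i h
          have hip := i.isLt
          by_cases hi0 : i.val = 0
          · rw [if_pos hi0] at h; exact absurd h.symm hA6
          · rw [if_neg hi0] at h
            have hval : (jM.val + i.val - 1) % p = 0 := congrArg Fin.val (h6only _ h)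
            rcases mod_cases' hp0 hval with hv | hv | hv
            · exact absurd hv (by omega)
            · refine Fin.ext ?_
              show i.val = p - jM.val + 3 - 2
              omega
            · exact absurd hv (by omega)
        · intro i h
          have hip := i.isLt
          by_cases hi0 : i.val = 0
          · rw [if_pos hi0] at h; exact hA5 h.symm
          · rw [if_neg hi0] at h
            have hval : (jM.val + i.val - 1) % p = 3 := congrArg Fin.val (h5only _ h)
            rcases mod_cases' (by omega : 3 < p) hval with hv | hv | hv <;> exact absurd hv (by omega)
      · -- middle apple: cycle x, c jm, ..., c jM with stem c 1 and pendant c 2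
        have hjmk : jm.val + 1 < k := by omega
        have hjMk : p - jM.val + 3 < k := by omega
        have hltjm : jm.val < jM.val := by omega
        refine hnoapple (jM.val - jm.val + 2) (by omega)
          ⟨_, arc_cycle G hp0 c hc x hxc jm.val (jM.val - jm.val + 2) (by omega) (by omega)
            ?_ ?_ ?_,
            c ⟨1, by omega⟩, c ⟨2, by omega⟩, ?_, ?_, cne' _ _ (by show (1:ℕ) ≠ 2; omega),
            ⟨⟨0, by omega⟩, ?_, ?_⟩,
            hadjc 1 2 (by omega) (by omega) (Or.inl (Nat.mod_eq_of_lt (by omega))), ?_⟩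
        · exact adjSub x (jm.val % p) jm.val (Nat.mod_lt _ hp0) jm.isLt
            (Nat.mod_eq_of_lt jm.isLt) hjmadj
        · refine adjSub x _ jM.val (Nat.mod_lt _ hp0) jM.isLt ?_ hjMadj
          rw [show jm.val + (jM.val - jm.val + 2) - 2 = jM.val by omega]
          exact Nat.mod_eq_of_lt jM.isLt
        · intro m hm1 hm2 hadj
          have hltp : jm.val + m < p := by omega
          have hadj' : G.Adj x (c ⟨jm.val + m, hltp⟩) :=
            adjSub x _ _ hltp (Nat.mod_lt _ hp0) (Nat.mod_eq_of_lt hltp).symm hadj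
          have hd4 := four_le_degree G x (c ⟨1, by omega⟩) (c ⟨jm.val, jm.isLt⟩)
            (c ⟨jM.val, jM.isLt⟩) (c ⟨jm.val + m, hltp⟩)
            (cne' _ _ (by show (1:ℕ) ≠ jm.val; omega))
            (cne' _ _ (by show (1:ℕ) ≠ jM.val; omega))
            (cne' _ _ (by show (1:ℕ) ≠ jm.val + m; omega))
            (cne' _ _ (by show (jm.val:ℕ) ≠ jM.val; omega))
            (cne' _ _ (by show (jm.val:ℕ) ≠ jm.val + m; omega))
            (cne' _ _ (by show (jM.val:ℕ) ≠ jm.val + m; omega))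
            hx2 hjmadj hjMadj hadj'
          have := hdeg x
          omega
        · intro i
          by_cases hi0 : i.val = 0
          · rw [if_pos hi0]; exact Ne.symm (hxc _)
          · rw [if_neg hi0]
            have hip := i.isLt
            refine cne' _ _ ?_
            show (1:ℕ) ≠ (jm.val + i.val - 1) % p
            rw [Nat.mod_eq_of_lt (by omega)]
            omega
        · intro i
          by_cases hi0 : i.val = 0
          · rw [if_pos hi0]; exact Ne.symm (hxc _)
          · rw [if_neg hi0]
            have hip := i.isLt
            refine cne' _ _ ?_
            show (2:ℕ) ≠ (jm.val + i.val - 1) % p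
            rw [Nat.mod_eq_of_lt (by omega)]
            omega
        · exact hx2.symm
        · intro i h
          have hip := i.isLt
          by_cases hi0 : i.val = 0
          · exact Fin.ext hi0
          · rw [if_neg hi0] at h
            have hmod : (jm.val + i.val - 1) % p = jm.val + i.val - 1 :=
              Nat.mod_eq_of_lt (by omega)
            have h2 : (1+1)%p = (jm.val + i.val - 1)%p ∨
                ((jm.val + i.val - 1)%p + 1)%p = 1 := (hcadj _ _).mp h
            rcases h2 with h2 | h2
            · rw [hmod, Nat.mod_eq_of_lt (by omega : 1+1 < p)] at h2
              exact absurd h2 (by omega)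
            · rw [hmod] at h2
              by_cases hq : jm.val + i.val - 1 + 1 = p
              · rw [hq, Nat.mod_self] at h2; exact absurd h2 (by omega)
              · rw [Nat.mod_eq_of_lt (by omega)] at h2
                exact absurd h2 (by omega)
        · intro i h
          have hip := i.isLt
          by_cases hi0 : i.val = 0
          · rw [if_pos hi0] at h; exact hA2 h.symm
          · rw [if_neg hi0] at h
            have hmod : (jm.val + i.val - 1) % p = jm.val + i.val - 1 :=
              Nat.mod_eq_of_lt (by omega)
            have h2 : (2+1)%p = (jm.val + i.val - 1)%p ∨
                ((jm.val + i.val - 1)%p + 1)%p = 2 := (hcadj _ _).mp h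
            rcases h2 with h2 | h2
            · rw [hmod, Nat.mod_eq_of_lt (by omega : 2+1 < p)] at h2
              exact absurd h2 (by omega)
            · rw [hmod] at h2
              by_cases hq : jm.val + i.val - 1 + 1 = p
              · rw [hq, Nat.mod_self] at h2; exact absurd h2 (by omega)
              · rw [Nat.mod_eq_of_lt (by omega)] at h2
                exact absurd h2 (by omega)
end

section
/- Let G be a subcubic graph, let C be an induced cycle of length p in G, and let x be a vertex not on C with exactly two neighbours u, v on C. If both cycles formed by x together with the two arcs of C between u and v have length at least 6, then G contains an induced apple with a long stem A*_t with t ≥ p/3, provided p ≥ 18. -/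
private def fArc {V : Type*} {p : ℕ} (hp0 : 0 < p) (c : Fin p → V) (i0 k : ℕ) : V :=
  c ⟨(i0 + k) % p, Nat.mod_lt _ hp0⟩

private lemma fArc_def {V : Type*} {p : ℕ} (hp0 : 0 < p) (c : Fin p → V) (i0 k : ℕ) :
    fArc hp0 c i0 k = c ⟨(i0 + k) % p, Nat.mod_lt _ hp0⟩ := rfl

private lemma arc_mod_eq {p i0 j0 : ℕ} (hi : i0 < p) (hj : j0 < p) :
    (j0 + p - i0) % p = if i0 ≤ j0 then j0 - i0 else j0 + p - i0 := by
  split_ifs with h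
  · have e : j0 + p - i0 = (j0 - i0) + p := by omega
    rw [e, Nat.add_mod_right]
    exact Nat.mod_eq_of_lt (by omega)
  · exact Nat.mod_eq_of_lt (by omega)

private lemma arc_shift {p i0 j0 : ℕ} (hi : i0 < p) (hj : j0 < p) :
    (i0 + (j0 + p - i0) % p) % p = j0 := by
  rw [arc_mod_eq hi hj]
  split_ifs with h
  · rw [show i0 + (j0 - i0) = j0 by omega]
    exact Nat.mod_eq_of_lt hj
  · rw [show i0 + (j0 + p - i0) = j0 + p by omega, Nat.add_mod_right]
    exact Nat.mod_eq_of_lt hj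

private lemma claimA_main {V : Type*} (G : SimpleGraph V)
    (p : ℕ) (hp : 18 ≤ p)
    (c : Fin p → V) (hc : IsIndCycle G c)
    (x : V) (hx : ∀ i, x ≠ c i)
    (i j : Fin p)
    (hadji : G.Adj x (c i)) (hadjj : G.Adj x (c j))
    (honly : ∀ k, G.Adj x (c k) → k = i ∨ k = j)
    (hbig : p ≤ 2 * ((j.val + p - i.val) % p))
    (hsmall : 4 ≤ (i.val + p - j.val) % p) :
    ∃ t : ℕ, p / 3 ≤ t ∧ HasAppleLongStem G t := by
  have hp0 : 0 < p := by omega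
  set i0 := i.val with hi0def
  set j0 := j.val with hj0def
  have hi0 : i0 < p := i.isLt
  have hj0 : j0 < p := j.isLt
  set a := (j0 + p - i0) % p with hadef
  have h1 := arc_mod_eq hi0 hj0
  have h2 := arc_mod_eq hj0 hi0
  have hne : i0 ≠ j0 := by
    intro h
    have hmz : (j0 + p - i0) % p = 0 := by
      rw [h, show j0 + p - j0 = p by omega, Nat.mod_self]
    rw [hadef] at hbig
    omega
  have hsum : a + (i0 + p - j0) % p = p := by
    rw [hadef, h1, h2]
    split_ifs <;> omega
  have hbiga : 9 ≤ a := by omega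
  have ha4 : a + 4 ≤ p := by omega
  have hshift : (i0 + a) % p = j0 := by rw [hadef]; exact arc_shift hi0 hj0
  have hcan : ∀ k l : ℕ, k < p → l < p → ((i0 + k) % p = (i0 + l) % p ↔ k = l) := by
    intro k l hk hl
    constructor
    · intro h
      have h2 : k % p = l % p := Nat.ModEq.add_left_cancel' i0 h
      rwa [Nat.mod_eq_of_lt hk, Nat.mod_eq_of_lt hl] at h2
    · intro h; rw [h]
  have hfinj : ∀ k l : ℕ, k < p → l < p → fArc hp0 c i0 k = fArc hp0 c i0 l → k = l := by
    intro k l hk hl h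
    rw [fArc_def, fArc_def] at h
    have h2 := hc.1 h
    have h3 : (i0 + k) % p = (i0 + l) % p := congrArg Fin.val h2
    exact (hcan k l hk hl).1 h3
  have hfadj : ∀ k l : ℕ, k + 1 < p → l + 1 < p →
      (G.Adj (fArc hp0 c i0 k) (fArc hp0 c i0 l) ↔ k + 1 = l ∨ l + 1 = k) := by
    intro k l hk hl
    rw [fArc_def, fArc_def, hc.2]
    simp only [Nat.mod_add_mod]
    rw [show i0 + k + 1 = i0 + (k + 1) by ring, show i0 + l + 1 = i0 + (l + 1) by ring,
      hcan (k + 1) l hk (by omega), hcan (l + 1) k hl (by omega)]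
  have hxadj : ∀ k : ℕ, k < p → (G.Adj x (fArc hp0 c i0 k) ↔ k = 0 ∨ k = a) := by
    intro k hk
    rw [fArc_def]
    constructor
    · intro h
      rcases honly _ h with h2 | h2
      · left
        have h3 : (i0 + k) % p = i0 := congrArg Fin.val h2
        have h4 : (i0 + k) % p = (i0 + 0) % p := by
          rw [h3, Nat.add_zero, Nat.mod_eq_of_lt hi0]
        exact (hcan k 0 hk hp0).1 h4
      · right
        have h3 : (i0 + k) % p = j0 := congrArg Fin.val h2
        have h4 : (i0 + k) % p = (i0 + a) % p := by rw [h3, hshift]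
        exact (hcan k a hk (by omega)).1 h4
    · rintro (rfl | rfl)
      · have he : (⟨(i0 + 0) % p, Nat.mod_lt _ hp0⟩ : Fin p) = i := by
          apply Fin.ext
          show (i0 + 0) % p = i0
          rw [Nat.add_zero, Nat.mod_eq_of_lt hi0]
        rw [he]; exact hadji
      · have he : (⟨(i0 + a) % p, Nat.mod_lt _ hp0⟩ : Fin p) = j := by
          apply Fin.ext
          exact hshift
        rw [he]; exact hadjj
  refine ⟨a + 2, by omega, ?_⟩
  set f := fArc hp0 c i0 with hfdef
  have hmod : ∀ k : ℕ, k < a + 2 → (k + 1) % (a + 2) = if k = a + 1 then 0 else k + 1 := by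
    intro k hk
    split_ifs with h
    · rw [h]; exact Nat.mod_self _
    · exact Nat.mod_eq_of_lt (by omega)
  refine ⟨fun m => if (m : ℕ) = 0 then x else f ((m : ℕ) - 1), ⟨?_, ?_⟩,
    f (a + 1), f (a + 2), ?_, ?_, ?_, ⟨⟨a + 1, by omega⟩, ?_, ?_⟩, ?_, ?_⟩
  · -- injectivity
    intro m n h
    have hm1 := m.isLt; have hn1 := n.isLt
    dsimp only at h
    by_cases hm : (m : ℕ) = 0 <;> by_cases hn : (n : ℕ) = 0
    · exact Fin.ext (by omega)
    · rw [if_pos hm, if_neg hn] at h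
      exact absurd h (hx _)
    · rw [if_neg hm, if_pos hn] at h
      exact absurd h.symm (hx _)
    · rw [if_neg hm, if_neg hn] at h
      have := hfinj _ _ (by omega) (by omega) h
      exact Fin.ext (by omega)
  · -- adjacency characterization
    intro m n
    have hm1 := m.isLt; have hn1 := n.isLt
    dsimp only
    rw [hmod _ hm1, hmod _ hn1]
    by_cases hm : (m : ℕ) = 0 <;> by_cases hn : (n : ℕ) = 0
    · rw [if_pos hm, if_pos hn]
      constructor
      · intro h; exact (G.irrefl h).elim
      · intro h; exfalso; split_ifs at h <;> omega
    · rw [if_pos hm, if_neg hn, hxadj _ (by omega)]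
      split_ifs <;> omega
    · rw [if_neg hm, if_pos hn, G.adj_comm, hxadj _ (by omega)]
      split_ifs <;> omega
    · rw [if_neg hm, if_neg hn, hfadj _ _ (by omega) (by omega)]
      split_ifs <;> omega
  · -- s not on cycle
    intro m
    have hm1 := m.isLt
    dsimp only
    split_ifs with hm
    · intro h; exact hx _ h.symm
    · intro h
      have := hfinj _ _ (by omega) (by omega) h
      omega
  · -- w not on cycle
    intro m
    have hm1 := m.isLt
    dsimp only
    split_ifs with hm
    · intro h; exact hx _ h.symm
    · intro h
      have := hfinj _ _ (by omega) (by omega) h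
      omega
  · -- s ≠ w
    intro h
    have := hfinj (a + 1) (a + 2) (by omega) (by omega) h
    omega
  · -- s adjacent to the last cycle vertex
    dsimp only
    rw [if_neg (by omega : ¬ (a + 1 = 0))]
    have : a + 1 - 1 = a := by omega
    rw [this]
    exact (hfadj (a + 1) a (by omega) (by omega)).2 (Or.inr rfl)
  · -- uniqueness of s's neighbour
    intro m hm
    have hm1 := m.isLt
    dsimp only at hm
    by_cases h0 : (m : ℕ) = 0
    · rw [if_pos h0, G.adj_comm, hxadj _ (by omega)] at hm
      exact absurd hm (by omega)
    · rw [if_neg h0, hfadj _ _ (by omega) (by omega)] at hm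
      apply Fin.ext
      show (m : ℕ) = a + 1
      omega
  · -- s adjacent to w
    exact (hfadj (a + 1) (a + 2) (by omega) (by omega)).2 (Or.inl rfl)
  · -- w has no neighbour on the cycle
    intro m
    have hm1 := m.isLt
    dsimp only
    split_ifs with h0
    · rw [G.adj_comm, hxadj _ (by omega)]
      omega
    · rw [hfadj _ _ (by omega) (by omega)]
      omega

/-- Claim A: if a vertex `x` off an induced cycle of length `p ≥ 18` in a subcubic
graph has exactly two neighbours `c i` and `c j` on the cycle, and both cycles
formed by `x` together with the two arcs of the cycle (of lengths
`(j-i mod p) + 2` and `(i-j mod p) + 2`) have length at least 6, then `G`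
contains an induced apple with a long stem `A*_t` with `t ≥ p/3`. -/
theorem claimA_apple {V : Type*} [Fintype V] (G : SimpleGraph V)
    [DecidableRel G.Adj] (hdeg : ∀ v, G.degree v ≤ 3)
    (p : ℕ) (hp : 18 ≤ p)
    (c : Fin p → V) (hc : IsIndCycle G c)
    (x : V) (hx : ∀ i, x ≠ c i)
    (i j : Fin p) (hij : i ≠ j)
    (hadji : G.Adj x (c i)) (hadjj : G.Adj x (c j))
    (honly : ∀ k, G.Adj x (c k) → k = i ∨ k = j)
    (hlen1 : 6 ≤ (j.val + p - i.val) % p + 2)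
    (hlen2 : 6 ≤ (i.val + p - j.val) % p + 2) :
    ∃ t : ℕ, p / 3 ≤ t ∧ HasAppleLongStem G t := by
  have hi0 : i.val < p := i.isLt
  have hj0 : j.val < p := j.isLt
  have hne : i.val ≠ j.val := fun h => hij (Fin.ext h)
  have h1 := arc_mod_eq hi0 hj0
  have h2 := arc_mod_eq hj0 hi0
  have hsum : (j.val + p - i.val) % p + (i.val + p - j.val) % p = p := by
    rw [h1, h2]; split_ifs <;> omega
  by_cases hbig : p ≤ 2 * ((j.val + p - i.val) % p)
  · exact claimA_main G p hp c hc x hx i j hadji hadjj honly hbig (by omega)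
  · exact claimA_main G p hp c hc x hx j i hadjj hadji
      (fun k h => (honly k h).symm) (by omega) (by omega)
end
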